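/- Quotient by a Top-Down congruence preserves the language: if A = (Σ, Q, F, δ) is a nondeterministic bottom-up tree automaton and ∼ is an equivalence relation on Q such that for all equivalent states p ∼ p' and every transition ((q₁,…,q_m), f, p) ∈ δ there exists a transition ((q'₁,…,q'_m), f, p') ∈ δ with q_i ∼ q'_i for all i, then for all p ∼ p' and every tree t, p ∈ δ(t) if and only if p' ∈ δ(t); consequently the quotient automaton A_∼ (with final states the classes of final states and transitions taken on classes) satisfies L(A) = L(A_∼). -/
import Mathlib


universe u v

/-- Trees over a graded alphabet: a symbol `f` of arity `ar f` has `ar f` children. -/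
inductive GTree (F : Type u) (ar : F → ℕ) : Type u
  | node (f : F) (ts : Fin (ar f) → GTree F ar) : GTree F ar

/-- Extension of a nondeterministic bottom-up transition relation to trees:
`q ∈ δ(f(t₁,…,t_n))` iff there are `qᵢ ∈ δ(tᵢ)` with `((q₁,…,q_n), f, q) ∈ δ`. -/
inductive ndEval {F : Type u} {Q : Type v} {ar : F → ℕ}
    (Δ : (f : F) → (Fin (ar f) → Q) → Q → Prop) : GTree F ar → Q → Prop
  | node (f : F) (ts : Fin (ar f) → GTree F ar) (qs : Fin (ar f) → Q) (q : Q) :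
      (∀ i, ndEval Δ (ts i) (qs i)) → Δ f qs q → ndEval Δ (GTree.node f ts) q

/-- The transition relation of the quotient automaton: transitions taken on classes. -/
def quotΔ {F : Type u} {Q : Type v} {ar : F → ℕ} (s : Setoid Q)
    (Δ : (f : F) → (Fin (ar f) → Q) → Q → Prop) :
    (f : F) → (Fin (ar f) → Quotient s) → Quotient s → Prop :=
  fun f cs c => ∃ (qs : Fin (ar f) → Q) (q : Q),
    Δ f qs q ∧ (∀ i, cs i = Quotient.mk s (qs i)) ∧ c = Quotient.mk s q

/-- Quotienting a nondeterministic bottom-up tree automaton by a Top-Down congruence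
preserves reachability of equivalent states and the recognized language. -/
theorem stmt_6 {F : Type} {Q : Type} {ar : F → ℕ}
    (Δ : (f : F) → (Fin (ar f) → Q) → Q → Prop) (Fset : Set Q)
    (s : Setoid Q)
    (hcong : ∀ p p', s.r p p' → ∀ (f : F) (qs : Fin (ar f) → Q),
      Δ f qs p → ∃ qs' : Fin (ar f) → Q, Δ f qs' p' ∧ ∀ i, s.r (qs i) (qs' i)) :
    (∀ p p', s.r p p' → ∀ t : GTree F ar, (ndEval Δ t p ↔ ndEval Δ t p')) ∧
    (∀ t : GTree F ar,
      (∃ q ∈ Fset, ndEval Δ t q) ↔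
      (∃ c, (∃ q ∈ Fset, c = Quotient.mk s q) ∧ ndEval (quotΔ s Δ) t c)) := by
  -- main lemma: transfer eval along equivalence
  have key : ∀ t : GTree F ar, ∀ p p', s.r p p' → ndEval Δ t p → ndEval Δ t p' := by
    intro t
    induction t with
    | node f ts ih =>
      intro p p' hpp' hev
      cases hev with
      | node _ _ qs _ hsub hΔ =>
        obtain ⟨qs', hΔ', hqq'⟩ := hcong p p' hpp' f qs hΔ
        exact ndEval.node f ts qs' p' (fun i => ih i (qs i) (qs' i) (hqq' i) (hsub i)) hΔ'
  have part1 : ∀ p p', s.r p p' → ∀ t : GTree F ar, (ndEval Δ t p ↔ ndEval Δ t p') :=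
    fun p p' h t => ⟨key t p p' h, key t p' p (s.symm h)⟩
  refine ⟨part1, ?_⟩
  have fwd : ∀ t : GTree F ar, ∀ q, ndEval Δ t q → ndEval (quotΔ s Δ) t (Quotient.mk s q) := by
    intro t
    induction t with
    | node f ts ih =>
      intro q hev
      cases hev with
      | node _ _ qs _ hsub hΔ =>
        exact ndEval.node f ts (fun i => Quotient.mk s (qs i)) _
          (fun i => ih i (qs i) (hsub i))
          ⟨qs, q, hΔ, fun i => rfl, rfl⟩
  have bwd : ∀ t : GTree F ar, ∀ c, ndEval (quotΔ s Δ) t c →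
      ∃ q, c = Quotient.mk s q ∧ ndEval Δ t q := by
    intro t
    induction t with
    | node f ts ih =>
      intro c hev
      cases hev with
      | node _ _ cs _ hsub hq =>
        obtain ⟨qs, q, hΔ, hcs, hc⟩ := hq
        refine ⟨q, hc, ?_⟩
        refine ndEval.node f ts qs q (fun i => ?_) hΔ
        obtain ⟨r, hr, hevr⟩ := ih i (cs i) (hsub i)
        have : s.r r (qs i) := Quotient.exact ((hr.symm.trans (hcs i)))
        exact key (ts i) r (qs i) this hevr
  intro t
  constructor
  · rintro ⟨q, hqF, hev⟩
    exact ⟨Quotient.mk s q, ⟨q, hqF, rfl⟩, fwd t q hev⟩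
  · rintro ⟨c, ⟨q, hqF, rfl⟩, hev⟩
    obtain ⟨r, hr, hevr⟩ := bwd t _ hev
    exact ⟨q, hqF, key t r q (Quotient.exact hr.symm) hevr⟩
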